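/- In the setting of the contrastive loss with temperature τ and batch 𝔅 = {x_p'} ∪ 𝔑, suppose that for all x, y in the domain, |⟨f(x), f(y)⟩| ≤ S where S ≤ τ/10. Then for every s, the softmax logit ℓ'_s = exp(⟨f(x_p), f(x_{n,s})⟩/τ) / Σ_{x ∈ 𝔅} exp(⟨f(x_p), f(x)⟩/τ) satisfies |ℓ'_s − 1/|𝔅|| ≤ C·S/(τ·|𝔅|) for an absolute constant C. -/

import Mathlib

/-!
Writing `aₓ = ⟨f x_p, f x⟩ / τ`, all exponents lie within `2S/τ ≤ 1/5` of each other, so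
`|e^{a_s} - e^{aₓ}| ≤ (4S/τ) e^{aₓ}` for every `x ∈ 𝔅` by `|e^u - 1| ≤ 2|u|`. Summing over `𝔅`
gives `||𝔅| e^{a_s} - Σₓ e^{aₓ}| ≤ (4S/τ) Σₓ e^{aₓ}`, which is the claim with `C = 4`
after dividing by `|𝔅| Σₓ e^{aₓ}`.
-/

open Real Finset

lemma Real.abs_exp_sub_exp_le {x y δ : ℝ} (hxy : |x - y| ≤ δ) (hδ : δ ≤ 1) :
    |exp x - exp y| ≤ 2 * δ * exp y := by
  have key : exp x - exp y = exp y * (exp (x - y) - 1) := by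
    rw [mul_sub, ← exp_add, add_sub_cancel, mul_one]
  calc |exp x - exp y| = exp y * |exp (x - y) - 1| := by
        rw [key, abs_mul, abs_of_pos (exp_pos y)]
    _ ≤ exp y * (2 * δ) := by
        gcongr
        exact (abs_exp_sub_one_le (hxy.trans hδ)).trans (by linarith)
    _ = 2 * δ * exp y := mul_comm _ _

lemma abs_exp_div_sum_exp_sub_one_div_card_le {ι : Type*} {s : Finset ι} {a : ι → ℝ} {i : ι}
    {δ : ℝ} (hi : i ∈ s) (ha : ∀ j ∈ s, |a i - a j| ≤ δ) (hδ : δ ≤ 1) :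
    |exp (a i) / ∑ j ∈ s, exp (a j) - 1 / #s| ≤ 2 * δ / #s := by
  set D := ∑ j ∈ s, exp (a j) with hD_def
  have hD : 0 < D := sum_pos (fun j _ ↦ exp_pos (a j)) ⟨i, hi⟩
  have hs : (0 : ℝ) < #s := by exact_mod_cast card_pos.mpr ⟨i, hi⟩
  have hdiff : exp (a i) / D - 1 / #s = (∑ j ∈ s, (exp (a i) - exp (a j))) / (#s * D) := by
    rw [sum_sub_distrib, ← hD_def, sum_const, nsmul_eq_mul]
    field_simp
  have hnum : |∑ j ∈ s, (exp (a i) - exp (a j))| ≤ 2 * δ * D :=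
    calc |∑ j ∈ s, (exp (a i) - exp (a j))| ≤ ∑ j ∈ s, |exp (a i) - exp (a j)| :=
          abs_sum_le_sum_abs _ _
      _ ≤ ∑ j ∈ s, 2 * δ * exp (a j) :=
          sum_le_sum fun j hj ↦ abs_exp_sub_exp_le (ha j hj) hδ
      _ = 2 * δ * D := (mul_sum _ _ _).symm
  rw [hdiff, abs_div, abs_of_pos (mul_pos hs hD), div_le_div_iff₀ (mul_pos hs hD) hs]
  nlinarith

/-- with all pairwise similarities bounded by `S ≤ τ/10`, every
softmax logit is within `C·S/(τ·|𝔅|)` of the uniform weight `1/|𝔅|`. -/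
theorem stmt8 :
    ∃ C : ℝ, 0 < C ∧
    ∀ {X : Type} [DecidableEq X] (m : ℕ) (f : X → Fin m → ℝ) (τ S : ℝ),
      0 < τ → S ≤ τ / 10 →
      (∀ x y : X, |∑ k, f x k * f y k| ≤ S) →
      ∀ (B : Finset X) (xp xs : X), xs ∈ B →
        |Real.exp ((∑ k, f xp k * f xs k) / τ) /
            (∑ x ∈ B, Real.exp ((∑ k, f xp k * f x k) / τ)) - 1 / B.card|
          ≤ C * S / (τ * B.card) := by
  refine ⟨4, by norm_num, ?_⟩
  intro X _ m f τ S hτ hS hbound B xp xs hxs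
  have hspread : ∀ x ∈ B,
      |(∑ k, f xp k * f xs k) / τ - (∑ k, f xp k * f x k) / τ| ≤ 2 * S / τ := by
    intro x _
    rw [← sub_div, abs_div, abs_of_pos hτ]
    gcongr
    linarith [abs_sub (∑ k, f xp k * f xs k) (∑ k, f xp k * f x k), hbound xp xs, hbound xp x]
  have hsmall : 2 * S / τ ≤ 1 := by
    rw [div_le_one hτ]
    linarith
  calc _ ≤ 2 * (2 * S / τ) / B.card :=
        abs_exp_div_sum_exp_sub_one_div_card_le (a := fun x ↦ (∑ k, f xp k * f x k) / τ)
          hxs hspread hsmall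
    _ = 4 * S / (τ * B.card) := by ring
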